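/- arXiv:1502.01824 — 3 statements merged into one kernel-verified Lean document; each statement's English description precedes it below -/
import Mathlib

section
/- For every n ≥ 2, the vertices v_1, v_2 and v_n are isolated vertices of the competition graph C(J_n(1)) of the finite Jaco graph J_n(1); in particular d⁺_{J_n(1)}(v_n) = 0. -/
/-- In-degree of vertex `v_i` in the infinite Jaco graph `J_∞(1)`, defined by strong
recursion: `d⁻(v_i)` is the number of `k < i` with an arc `(v_k, v_i)`, where for `k < i`
the arc `(v_k, v_i)` is present iff `2k - d⁻(v_k) ≥ i` (and `k ≥ 1`). -/
noncomputable def jacoInDeg (n : ℕ) : ℕ :=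
  Nat.strongRecOn n (fun n ih =>
    ((Finset.range n).attach.filter
      (fun k => 1 ≤ k.1 ∧ n ≤ 2 * k.1 - ih k.1 (Finset.mem_range.mp k.2))).card)

/-- The arc `(v_i, v_j)` of the infinite Jaco graph `J_∞(1)` (vertices indexed from 1):
present iff `i < j` and `2i - d⁻(v_i) ≥ j`. -/
def jacoArc (i j : ℕ) : Prop :=
  1 ≤ i ∧ i < j ∧ j ≤ 2 * i - jacoInDeg i

noncomputable instance (i j : ℕ) : Decidable (jacoArc i j) := by unfold jacoArc; infer_instance

/-- Out-degree of `v_i` in the finite Jaco graph `J_n(1)` (vertex set `{v_1, …, v_n}`). -/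
noncomputable  def jacoOutDeg (n i : ℕ) : ℕ :=
  ((Finset.Icc 1 n).filter (fun j => jacoArc i j)).card

/-- In-degree of `v_i` in the finite Jaco graph `J_n(1)`. -/
noncomputable def jacoInDegFin (n i : ℕ) : ℕ :=
  ((Finset.Icc 1 n).filter (fun k => jacoArc k i)).card

/-- Adjacency in the competition graph `C(J_n(1))`: distinct vertices `v_a, v_b` of
`J_n(1)` are adjacent iff some vertex `v_w` of `J_n(1)` is a common out-neighbour. -/
def jacoCompAdj (n a b : ℕ) : Prop :=
  a ≠ b ∧ a ∈ Finset.Icc 1 n ∧ b ∈ Finset.Icc 1 n ∧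
    ∃ w ∈ Finset.Icc 1 n, jacoArc a w ∧ jacoArc b w



lemma jacoInDeg_eq (n : ℕ) : jacoInDeg n =
    ((Finset.range n).attach.filter
      (fun k => 1 ≤ k.1 ∧ n ≤ 2 * k.1 - jacoInDeg k.1)).card := by
  conv_lhs => rw [jacoInDeg, Nat.strongRecOn, WellFounded.fix_eq]
  rfl

lemma jacoInDeg_one : jacoInDeg 1 = 0 := by
  rw [jacoInDeg_eq]
  rw [Finset.card_eq_zero, Finset.filter_eq_empty_iff]
  rintro ⟨k, hk⟩ _
  simp only [Finset.mem_range] at hk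
  interval_cases k
  simp

lemma jacoInDeg_two : jacoInDeg 2 = 1 := by
  rw [jacoInDeg_eq]
  rw [Finset.card_eq_one]
  have h1 : (1 : ℕ) ∈ Finset.range 2 := by simp
  refine ⟨⟨1, h1⟩, ?_⟩
  ext ⟨k, hk⟩
  have hk' := Finset.mem_range.mp hk
  simp only [Finset.mem_filter, Finset.mem_attach, true_and, Finset.mem_singleton,
    Subtype.mk.injEq]
  constructor
  · rintro ⟨h1k, h2k⟩
    interval_cases k
    rfl
  · rintro rfl
    refine ⟨le_refl 1, ?_⟩
    rw [jacoInDeg_one]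

lemma arc_one {w : ℕ} (h : jacoArc 1 w) : w = 2 := by
  obtain ⟨_, h1, h2⟩ := h
  rw [jacoInDeg_one] at h2
  omega

lemma arc_two {w : ℕ} (h : jacoArc 2 w) : w = 3 := by
  obtain ⟨_, h1, h2⟩ := h
  rw [jacoInDeg_two] at h2
  omega

lemma arc_to_two {a : ℕ} (h : jacoArc a 2) : a = 1 := by
  obtain ⟨h0, h1, _⟩ := h
  omega

lemma arc_to_three {a : ℕ} (h : jacoArc a 3) : a = 2 := by
  obtain ⟨h0, h1, h2⟩ := h
  interval_cases a
  · rw [jacoInDeg_one] at h2; omega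
  · rfl

/-- For `n ≥ 2`, the vertices `v_1`, `v_2` and `v_n` are isolated in the
competition graph `C(J_n(1))`; in particular `d⁺_{J_n(1)}(v_n) = 0`. -/
theorem isolated_vertices_of_competition_graph (n : ℕ) (hn : 2 ≤ n) :
    (∀ b : ℕ,
      ¬ jacoCompAdj n 1 b ∧ ¬ jacoCompAdj n b 1 ∧
      ¬ jacoCompAdj n 2 b ∧ ¬ jacoCompAdj n b 2 ∧
      ¬ jacoCompAdj n n b ∧ ¬ jacoCompAdj n b n) ∧
    jacoOutDeg n n = 0 := by
  have hout : ∀ w ∈ Finset.Icc 1 n, ¬ jacoArc n w := by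
    rintro w hw ⟨_, h1, _⟩
    simp only [Finset.mem_Icc] at hw
    omega
  constructor
  · intro b
    refine ⟨?_, ?_, ?_, ?_, ?_, ?_⟩
    · rintro ⟨hne, _, _, w, hw, h1w, hbw⟩
      rw [arc_one h1w] at hbw
      exact hne (arc_to_two hbw).symm
    · rintro ⟨hne, _, _, w, hw, hbw, h1w⟩
      rw [arc_one h1w] at hbw
      exact hne (arc_to_two hbw)
    · rintro ⟨hne, _, _, w, hw, h2w, hbw⟩
      rw [arc_two h2w] at hbw
      exact hne (arc_to_three hbw).symm
    · rintro ⟨hne, _, _, w, hw, hbw, h2w⟩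
      rw [arc_two h2w] at hbw
      exact hne (arc_to_three hbw)
    · rintro ⟨_, _, _, w, hw, hnw, _⟩
      exact hout w hw hnw
    · rintro ⟨_, _, _, w, hw, _, hnw⟩
      exact hout w hw hnw
  · rw [jacoOutDeg, Finset.card_eq_zero, Finset.filter_eq_empty_iff]
    exact hout
end

section
/- For every n ≥ 3, the grog number of the path graph satisfies g(P_{n+1}) = g(P_n) + (n−1). -/
/-- A state of the Grog algorithm: a finite set of remaining arcs (on vertices `v_1, v_2, …`,
identified with positive naturals) together with the current population of every vertex. -/
structure PPState where
  arcs : Finset (ℕ × ℕ)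
  pop : ℕ → ℕ

/-- One predation step along the arc `a = (u, w)`: the arc is deleted and the populations
of `u` and `w` each decrease by `1`. -/
def predStep (s : PPState) (a : ℕ × ℕ) : PPState :=
  ⟨s.arcs.erase a, fun v => if v = a.1 ∨ v = a.2 then s.pop v - 1 else s.pop v⟩

/-- The arc `a` may be predated along in state `s`: it is a current arc and both of its
endpoints have current population at least `1`. -/
def validArc (s : PPState) (a : ℕ × ℕ) : Prop :=
  a ∈ s.arcs ∧ 1 ≤ s.pop a.1 ∧ 1 ≤ s.pop a.2

/-- Run a sequence of predation steps from a state. -/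
def runSeq : PPState → List (ℕ × ℕ) → PPState
  | s, [] => s
  | s, a :: l => runSeq (predStep s a) l

/-- The sequence of predation steps is valid from state `s`. -/
def ValidSeq : PPState → List (ℕ × ℕ) → Prop
  | _, [] => True
  | s, a :: l => validArc s a ∧ ValidSeq (predStep s a) l

/-- No further predation step is possible. -/
def Terminal (s : PPState) : Prop := ∀ a ∈ s.arcs, ¬ validArc s a

/-- A predator-prey strategy from state `s`: a maximal valid sequence of predation steps. -/
def IsStrategy (s : PPState) (l : List (ℕ × ℕ)) : Prop :=
  ValidSeq s l ∧ Terminal (runSeq s l)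

/-- The initial state of the digraph with arc set `A`, with initial populations `ρ(v_i) = i`. -/
def initState (A : Finset (ℕ × ℕ)) : PPState := ⟨A, id⟩

/-- The (residual) population of a state, summed over the vertices `v_1, …, v_n`. -/
def resid (n : ℕ) (s : PPState) : ℕ := ∑ v ∈ Finset.Icc 1 n, s.pop v

/-- The grog number of the digraph on `v_1, …, v_n` with arc set `A`: the minimum of the
residual population over all predator-prey strategies. -/
noncomputable def grogD (n : ℕ) (A : Finset (ℕ × ℕ)) : ℕ :=
  sInf {r | ∃ l, IsStrategy (initState A) l ∧ resid n (runSeq (initState A) l) = r}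

/-- `A` is an orientation of the labelled graph obtained from the simple graph `G` via the
bijective labelling `f` of its vertices by `v_1, …, v_n`. -/
def LabelledOrientation {V : Type*} (G : SimpleGraph V) (n : ℕ) (f : V → ℕ)
    (A : Finset (ℕ × ℕ)) : Prop :=
  Function.Injective f ∧ Set.range f = ↑(Finset.Icc 1 n) ∧
  (∀ u v, G.Adj u v ↔ ((f u, f v) ∈ A ∨ (f v, f u) ∈ A)) ∧
  (∀ u v, ¬(((f u, f v) ∈ A) ∧ ((f v, f u) ∈ A))) ∧
  (∀ a ∈ A, ∃ u v, G.Adj u v ∧ a = (f u, f v))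

/-- `A` is an orientation of the path `P_n` whose vertices, in path order, are labelled
`p 0, p 1, …, p (n-1)`, where `p` is a bijection onto `{1, …, n}`. -/
def PathOrientation (n : ℕ) (p : ℕ → ℕ) (A : Finset (ℕ × ℕ)) : Prop :=
  Set.BijOn p (Set.Iio n) (Set.Icc 1 n) ∧
  (∀ i, i + 1 < n →
    (((p i, p (i+1)) ∈ A ∨ (p (i+1), p i) ∈ A) ∧
      ¬(((p i, p (i+1)) ∈ A) ∧ ((p (i+1), p i) ∈ A)))) ∧
  (∀ a ∈ A, ∃ i, i + 1 < n ∧ (a = (p i, p (i+1)) ∨ a = (p (i+1), p i)))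

/-- `A` is an orientation of the cycle `C_n` whose vertices, in cyclic order, are labelled
`p 0, p 1, …, p (n-1)`, where `p` is a bijection onto `{1, …, n}`. -/
def CycleOrientation (n : ℕ) (p : ℕ → ℕ) (A : Finset (ℕ × ℕ)) : Prop :=
  Set.BijOn p (Set.Iio n) (Set.Icc 1 n) ∧
  (∀ i < n,
    (((p i, p ((i+1) % n)) ∈ A ∨ (p ((i+1) % n), p i) ∈ A) ∧
      ¬(((p i, p ((i+1) % n)) ∈ A) ∧ ((p ((i+1) % n), p i) ∈ A)))) ∧
  (∀ a ∈ A, ∃ i < n, a = (p i, p ((i+1) % n)) ∨ a = (p ((i+1) % n), p i))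

/-- The grog number of the path graph `P_n`: the minimum of the grog number over all
bijective labellings of its vertices by `v_1, …, v_n` and all orientations. -/
noncomputable def grogPath (n : ℕ) : ℕ :=
  sInf {r | ∃ (p : ℕ → ℕ) (A : Finset (ℕ × ℕ)), PathOrientation n p A ∧ grogD n A = r}


/-! A predation step removes exactly two individuals, one from each endpoint of a deleted arc,
so on any orientation of `P_n` a strategy leaves at least `1 + ⋯ + n - 2(n - 1)`. The orientation
`v_1 → v_2 → ⋯ → v_n`, predated along the path in order, attains this bound: when the arc
`v_k → v_{k+1}` is used, `v_k` has lost at most one of its `k` individuals and `v_{k+1}` none.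
Thus `g(P_n) + 2(n - 1) = 1 + ⋯ + n`, and the recurrence is the difference of two instances. -/

open Finset

section Game

variable {n : ℕ} {s : PPState} {a : ℕ × ℕ} {l : List (ℕ × ℕ)}

lemma runSeq_append (s : PPState) (l₁ l₂ : List (ℕ × ℕ)) :
    runSeq s (l₁ ++ l₂) = runSeq (runSeq s l₁) l₂ := by
  induction l₁ generalizing s with
  | nil => rfl
  | cons a l ih => exact ih _

lemma validSeq_append (s : PPState) (l₁ l₂ : List (ℕ × ℕ)) :
    ValidSeq s (l₁ ++ l₂) ↔ ValidSeq s l₁ ∧ ValidSeq (runSeq s l₁) l₂ := by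
  induction l₁ generalizing s with
  | nil => simp [ValidSeq, runSeq]
  | cons a l ih => simp [ValidSeq, runSeq, ih, and_assoc]

lemma runSeq_arcs (s : PPState) (l : List (ℕ × ℕ)) :
    (runSeq s l).arcs = s.arcs \ l.toFinset := by
  induction l generalizing s with
  | nil => simp [runSeq]
  | cons a l ih =>
    rw [runSeq, ih, List.toFinset_cons, sdiff_insert]
    exact erase_sdiff_comm _ _ _

lemma ValidSeq.length_le_card (h : ValidSeq s l) : l.length ≤ #s.arcs := by
  induction l generalizing s with
  | nil => simp
  | cons a l ih =>
    have hlt : #(s.arcs.erase a) < #s.arcs := card_erase_lt_of_mem h.1.1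
    exact (Nat.succ_le_succ (ih h.2)).trans hlt

lemma exists_isStrategy (s : PPState) : ∃ l, IsStrategy s l := by
  by_cases h : ∃ a, validArc s a
  · obtain ⟨a, ha⟩ := h
    obtain ⟨l, hl, hterm⟩ := exists_isStrategy (predStep s a)
    exact ⟨a :: l, ⟨ha, hl⟩, hterm⟩
  · exact ⟨[], trivial, fun a _ ha => h ⟨a, ha⟩⟩
termination_by #s.arcs
decreasing_by exact card_erase_lt_of_mem ha.1

lemma resid_predStep_add_card (n : ℕ) (h : validArc s a) :
    resid n (predStep s a) + #{v ∈ Icc 1 n | v = a.1 ∨ v = a.2} = resid n s := by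
  rw [resid, resid, card_filter, ← sum_add_distrib]
  refine sum_congr rfl fun v _ => ?_
  dsimp only [predStep]
  split_ifs with hv
  · rcases hv with rfl | rfl
    · have := h.2.1; omega
    · have := h.2.2; omega
  · rfl

lemma resid_le_resid_predStep_add_two (n : ℕ) (h : validArc s a) :
    resid n s ≤ resid n (predStep s a) + 2 := by
  have hsub : {v ∈ Icc 1 n | v = a.1 ∨ v = a.2} ⊆ {a.1, a.2} := by
    intro v hv
    simpa using (mem_filter.1 hv).2
  rw [← resid_predStep_add_card n h]
  exact Nat.add_le_add_left ((card_le_card hsub).trans card_le_two) _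

lemma resid_predStep_add_two (h : validArc s a) (hne : a.1 ≠ a.2)
    (h₁ : a.1 ∈ Icc 1 n) (h₂ : a.2 ∈ Icc 1 n) :
    resid n (predStep s a) + 2 = resid n s := by
  have hpair : {v ∈ Icc 1 n | v = a.1 ∨ v = a.2} = {a.1, a.2} := by
    ext v
    simp only [mem_filter, mem_insert, mem_singleton]
    constructor
    · exact And.right
    · rintro (rfl | rfl) <;> simp_all
  rw [← resid_predStep_add_card n h, hpair, card_pair hne]

lemma ValidSeq.resid_le_resid_runSeq_add (n : ℕ) (h : ValidSeq s l) :
    resid n s ≤ resid n (runSeq s l) + 2 * l.length := by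
  induction l generalizing s with
  | nil => simp [runSeq]
  | cons a l ih =>
    have := resid_le_resid_predStep_add_two n h.1
    have := ih h.2
    simp only [runSeq, List.length_cons]
    omega

lemma ValidSeq.resid_runSeq_add (h : ValidSeq s l)
    (hl : ∀ a ∈ l, a.1 ≠ a.2 ∧ a.1 ∈ Icc 1 n ∧ a.2 ∈ Icc 1 n) :
    resid n (runSeq s l) + 2 * l.length = resid n s := by
  induction l generalizing s with
  | nil => simp [runSeq]
  | cons a l ih =>
    obtain ⟨hne, h₁, h₂⟩ := hl a List.mem_cons_self
    have := resid_predStep_add_two h.1 hne h₁ h₂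
    have := ih h.2 fun b hb => hl b (List.mem_cons_of_mem a hb)
    simp only [runSeq, List.length_cons]
    omega

lemma exists_isStrategy_resid_eq_grogD (n : ℕ) (A : Finset (ℕ × ℕ)) :
    ∃ l, IsStrategy (initState A) l ∧ resid n (runSeq (initState A) l) = grogD n A :=
  have ⟨l, hl⟩ := exists_isStrategy (initState A)
  Nat.sInf_mem (s := {r | ∃ l, IsStrategy (initState A) l ∧ resid n (runSeq (initState A) l) = r})
    ⟨_, l, hl, rfl⟩

lemma sum_Icc_le_grogD_add_two_mul_card (n : ℕ) (A : Finset (ℕ × ℕ)) :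
    ∑ v ∈ Icc 1 n, v ≤ grogD n A + 2 * #A := by
  obtain ⟨l, ⟨hl, -⟩, hmin⟩ := exists_isStrategy_resid_eq_grogD n A
  have : l.length ≤ #A := hl.length_le_card
  have := hl.resid_le_resid_runSeq_add n
  change resid n (initState A) ≤ _
  omega

end Game

section Path

lemma PathOrientation.card_le {n : ℕ} {p : ℕ → ℕ} {A : Finset (ℕ × ℕ)}
    (h : PathOrientation n p A) : #A ≤ n - 1 := by
  let pick : ℕ → ℕ × ℕ := fun i =>
    if (p i, p (i + 1)) ∈ A then (p i, p (i + 1)) else (p (i + 1), p i)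
  have hsub : A ⊆ (range (n - 1)).image pick := by
    intro a ha
    obtain ⟨i, hi, rfl | rfl⟩ := h.2.2 a ha
    · exact mem_image.2 ⟨i, mem_range.2 (by omega), if_pos ha⟩
    · exact mem_image.2 ⟨i, mem_range.2 (by omega), if_neg fun h' => (h.2.1 i hi).2 ⟨h', ha⟩⟩
  calc #A ≤ #((range (n - 1)).image pick) := card_le_card hsub
    _ ≤ #(range (n - 1)) := card_image_le
    _ = n - 1 := card_range _

def pathSteps (j : ℕ) : List (ℕ × ℕ) := (List.range' 1 j).map fun k => (k, k + 1)

def pathArcs (n : ℕ) : Finset (ℕ × ℕ) := (pathSteps (n - 1)).toFinset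

lemma mem_pathSteps {j : ℕ} {a : ℕ × ℕ} :
    a ∈ pathSteps j ↔ ∃ k, 1 ≤ k ∧ k ≤ j ∧ a = (k, k + 1) := by
  simp only [pathSteps, List.mem_map, List.mem_range'_1]
  constructor
  · rintro ⟨k, hk, rfl⟩
    exact ⟨k, hk.1, by omega, rfl⟩
  · rintro ⟨k, hk₁, hk₂, rfl⟩
    exact ⟨k, ⟨hk₁, by omega⟩, rfl⟩

lemma pathSteps_succ (j : ℕ) : pathSteps (j + 1) = pathSteps j ++ [(j + 1, j + 2)] := by
  rw [pathSteps, List.range'_1_concat, List.map_append, add_comm 1 j]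
  rfl

lemma pathOrientation_pathArcs (n : ℕ) : PathOrientation n (· + 1) (pathArcs n) := by
  simp only [PathOrientation, pathArcs, List.mem_toFinset, mem_pathSteps]
  refine ⟨⟨?_, ?_, ?_⟩, ?_, ?_⟩
  · intro i hi
    simp only [Set.mem_Iio, Set.mem_Icc] at hi ⊢
    omega
  · intro i _ j _ hij
    exact Nat.add_right_cancel hij
  · intro m hm
    simp only [Set.mem_Icc] at hm
    exact ⟨m - 1, by simp only [Set.mem_Iio]; omega, Nat.sub_add_cancel hm.1⟩
  · intro i hi
    refine ⟨Or.inl ⟨i + 1, by omega, by omega, rfl⟩, ?_⟩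
    rintro ⟨-, k, -, -, hk⟩
    simp only [Prod.mk.injEq] at hk
    omega
  · rintro a ⟨k, hk₁, hk₂, rfl⟩
    exact ⟨k - 1, by omega, Or.inl (by simp only [Prod.mk.injEq]; omega)⟩

lemma validSeq_pathSteps (n : ℕ) {j : ℕ} (hj : j ≤ n - 1) :
    ValidSeq (initState (pathArcs n)) (pathSteps j) ∧
      1 ≤ (runSeq (initState (pathArcs n)) (pathSteps j)).pop (j + 1) ∧
      ∀ v, j + 2 ≤ v → (runSeq (initState (pathArcs n)) (pathSteps j)).pop v = v := by
  induction j with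
  | zero => exact ⟨trivial, le_rfl, fun _ _ => rfl⟩
  | succ j ih =>
    obtain ⟨hvalid, hpop₁, hpop⟩ := ih (by omega)
    set S := runSeq (initState (pathArcs n)) (pathSteps j)
    have hmem : (j + 1, j + 2) ∈ S.arcs := by
      simp only [S, runSeq_arcs, initState, pathArcs, mem_sdiff, List.mem_toFinset,
        mem_pathSteps, Prod.mk.injEq]
      exact ⟨⟨j + 1, by omega, by omega, rfl, rfl⟩, by omega⟩
    have hstep : validArc S (j + 1, j + 2) := ⟨hmem, hpop₁, by rw [hpop _ le_rfl]; omega⟩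
    rw [pathSteps_succ, validSeq_append, runSeq_append]
    refine ⟨⟨hvalid, hstep, trivial⟩, ?_, fun v hv => ?_⟩
    · change 1 ≤ (predStep S (j + 1, j + 2)).pop (j + 2)
      dsimp only [predStep]
      rw [if_pos (Or.inr rfl), hpop _ le_rfl]
      omega
    · change (predStep S (j + 1, j + 2)).pop v = v
      dsimp only [predStep]
      rw [if_neg (by omega), hpop v (by omega)]

lemma isStrategy_pathSteps (n : ℕ) :
    IsStrategy (initState (pathArcs n)) (pathSteps (n - 1)) := by
  refine ⟨(validSeq_pathSteps n le_rfl).1, fun a ha => absurd ha ?_⟩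
  simp [runSeq_arcs, initState, pathArcs]

lemma resid_runSeq_pathSteps (n : ℕ) :
    resid n (runSeq (initState (pathArcs n)) (pathSteps (n - 1))) + 2 * (n - 1) =
      ∑ v ∈ Icc 1 n, v := by
  have h := (validSeq_pathSteps n le_rfl).1.resid_runSeq_add (n := n) ?_
  · rwa [pathSteps, List.length_map, List.length_range'] at h
  · intro a ha
    obtain ⟨k, hk₁, hk₂, rfl⟩ := mem_pathSteps.1 ha
    simp only [mem_Icc]
    omega

lemma exists_pathOrientation_grogD_eq_grogPath (n : ℕ) :
    ∃ p A, PathOrientation n p A ∧ grogD n A = grogPath n :=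
  Nat.sInf_mem (s := {r | ∃ p A, PathOrientation n p A ∧ grogD n A = r})
    ⟨_, _, _, pathOrientation_pathArcs n, rfl⟩

lemma grogPath_add_two_mul (n : ℕ) : grogPath n + 2 * (n - 1) = ∑ v ∈ Icc 1 n, v := by
  refine le_antisymm ?_ ?_
  · have hD : grogD n (pathArcs n) ≤
        resid n (runSeq (initState (pathArcs n)) (pathSteps (n - 1))) :=
      Nat.sInf_le ⟨_, isStrategy_pathSteps n, rfl⟩
    have hP : grogPath n ≤ grogD n (pathArcs n) :=
      Nat.sInf_le ⟨_, _, pathOrientation_pathArcs n, rfl⟩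
    have := resid_runSeq_pathSteps n
    omega
  · obtain ⟨p, A, hA, hmin⟩ := exists_pathOrientation_grogD_eq_grogPath n
    have := sum_Icc_le_grogD_add_two_mul_card n A
    have := hA.card_le
    rw [← hmin]
    omega

end Path

/-- For every `n ≥ 3`, `g(P_{n+1}) = g(P_n) + (n - 1)`. -/
theorem grog_number_of_path (n : ℕ) (hn : 3 ≤ n) :
    grogPath (n + 1) = grogPath n + (n - 1) := by
  have h := grogPath_add_two_mul n
  have h' := grogPath_add_two_mul (n + 1)
  rw [sum_Icc_succ_top (by omega)] at h'
  omega
end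

section
/- Let n ≥ 2 and let v_i be the Jaconian vertex of the finite Jaco graph J_n(1), so that the arcs of J_{n+1}(1) that are not arcs of J_n(1) are exactly the arcs (v_j, v_{n+1}) for i+1 ≤ j ≤ n (i.e. the in-neighbourhood of v_{n+1} in J_{n+1}(1) is {v_{i+1}, …, v_n}). Then the grog numbers of the Jaco graphs satisfy g(J_{n+1}(1)) = g(J_n(1)) + (2i − n) + 1. -/
/-- The arc set of the finite Jaco graph `J_n(1)` as a finite set of pairs. -/
noncomputable def jacoArcs (n : ℕ) : Finset (ℕ × ℕ) :=
  (Finset.Icc 1 n ×ˢ Finset.Icc 1 n).filter (fun a => jacoArc a.1 a.2)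

/-- The grog number of the finite Jaco graph `J_n(1)`. -/
noncomputable def grogJaco (n : ℕ) : ℕ := grogD n (jacoArcs n)

/-! Every vertex `v_k` of a Jaco graph has degree at most `k`: its out-arcs end in
`(k, 2k - d⁻(v_k)]` and it has `d⁻(v_k)` in-arcs. With populations `ρ(v_k) = k` no arc is then
ever blocked, so the grog number is `∑ k - 2 · #arcs`. Passing from `J_n(1)` to `J_{n+1}(1)` adds
the population `n + 1` and the `n - i` in-arcs of `v_{n+1}`. -/

open Finset

def LooplessOn (n : ℕ) (A : Finset (ℕ × ℕ)) : Prop :=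
  ∀ a ∈ A, a.1 ≠ a.2 ∧ a.1 ∈ Icc 1 n ∧ a.2 ∈ Icc 1 n

def arcDegree (A : Finset (ℕ × ℕ)) (v : ℕ) : ℕ :=
  #(A.filter fun a => a.1 = v ∨ a.2 = v)

lemma arcDegree_erase {A : Finset (ℕ × ℕ)} {a : ℕ × ℕ} (ha : a ∈ A) (v : ℕ) :
    arcDegree (A.erase a) v =
      if v = a.1 ∨ v = a.2 then arcDegree A v - 1 else arcDegree A v := by
  unfold arcDegree
  rw [filter_erase]
  split_ifs with hv
  · exact card_erase_of_mem (mem_filter.mpr ⟨ha, hv.imp Eq.symm Eq.symm⟩)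
  · rw [erase_eq_of_notMem fun h => hv ((mem_filter.mp h).2.imp Eq.symm Eq.symm)]

lemma one_le_arcDegree_fst {A : Finset (ℕ × ℕ)} {a : ℕ × ℕ} (ha : a ∈ A) :
    1 ≤ arcDegree A a.1 :=
  card_pos.mpr ⟨a, mem_filter.mpr ⟨ha, Or.inl rfl⟩⟩

lemma one_le_arcDegree_snd {A : Finset (ℕ × ℕ)} {a : ℕ × ℕ} (ha : a ∈ A) :
    1 ≤ arcDegree A a.2 :=
  card_pos.mpr ⟨a, mem_filter.mpr ⟨ha, Or.inr rfl⟩⟩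

lemma arcDegree_le_pop_predStep {s : PPState} {a : ℕ × ℕ} (ha : a ∈ s.arcs)
    (hdeg : ∀ v, arcDegree s.arcs v ≤ s.pop v) (v : ℕ) :
    arcDegree (predStep s a).arcs v ≤ (predStep s a).pop v := by
  have := hdeg v
  simp only [predStep, arcDegree_erase ha]
  split_ifs <;> omega

/-- The bound `arcDegree ≤ pop` makes every arc valid and survives a predation step, since both
endpoints lose one arc and one individual. -/
lemma exists_validSeq_arcs_runSeq_eq_empty (s : PPState)
    (hdeg : ∀ v, arcDegree s.arcs v ≤ s.pop v) :
    ∃ l, ValidSeq s l ∧ (runSeq s l).arcs = ∅ := by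
  induction h : s.arcs.card generalizing s with
  | zero => exact ⟨[], trivial, card_eq_zero.mp h⟩
  | succ N ih =>
    obtain ⟨a, ha⟩ := (card_pos (s := s.arcs)).mp (by omega)
    have hvalid : validArc s a :=
      ⟨ha, (one_le_arcDegree_fst ha).trans (hdeg _), (one_le_arcDegree_snd ha).trans (hdeg _)⟩
    have hcard : (predStep s a).arcs.card = N := by
      simp only [predStep, card_erase_of_mem ha, h, Nat.add_sub_cancel]
    obtain ⟨l, hl, hempty⟩ := ih (predStep s a) (arcDegree_le_pop_predStep ha hdeg) hcard
    exact ⟨a :: l, ⟨hvalid, hl⟩, hempty⟩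

lemma card_arcs_runSeq_add_length {s : PPState} {l : List (ℕ × ℕ)} (hl : ValidSeq s l) :
    (runSeq s l).arcs.card + l.length = s.arcs.card := by
  induction l generalizing s with
  | nil => rfl
  | cons a l ih =>
    obtain ⟨⟨ha, -⟩, hl⟩ := hl
    have := ih hl
    have := card_pos.mpr ⟨a, ha⟩
    simp only [runSeq, List.length_cons, predStep, card_erase_of_mem ha] at *
    omega

lemma resid_predStep {n : ℕ} {s : PPState} {a : ℕ × ℕ} (hloop : LooplessOn n s.arcs)
    (ha : validArc s a) : resid n (predStep s a) + 2 = resid n s := by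
  obtain ⟨ha, h1, h2⟩ := ha
  obtain ⟨hne, hmem1, hmem2⟩ := hloop a ha
  have hpop : ∀ v ∈ Icc 1 n, s.pop v =
      (predStep s a).pop v + if v ∈ ({a.1, a.2} : Finset ℕ) then 1 else 0 := by
    intro v _
    simp only [predStep, mem_insert, mem_singleton]
    split_ifs with hv
    · rcases hv with rfl | rfl <;> omega
    · rfl
  have hpair : Icc 1 n ∩ {a.1, a.2} = {a.1, a.2} :=
    inter_eq_right.mpr (insert_subset hmem1 (singleton_subset_iff.mpr hmem2))
  rw [resid, resid, sum_congr rfl hpop, sum_add_distrib, sum_ite_mem, hpair, sum_const,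
    card_pair hne, smul_eq_mul, mul_one]

lemma resid_runSeq_add_two_mul_length {n : ℕ} {s : PPState} {l : List (ℕ × ℕ)}
    (hloop : LooplessOn n s.arcs) (hl : ValidSeq s l) :
    resid n (runSeq s l) + 2 * l.length = resid n s := by
  induction l generalizing s with
  | nil => rfl
  | cons a l ih =>
    obtain ⟨ha, hl⟩ := hl
    have := ih (fun b hb => hloop b (mem_of_mem_erase hb)) hl
    have := resid_predStep hloop ha
    simp only [runSeq, List.length_cons] at *
    omega

/-- Each step removes two individuals and at most `#A` steps are possible; under the degree
bound some strategy makes all of them. -/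
theorem grogD_add_two_mul_card {n : ℕ} {A : Finset (ℕ × ℕ)} (hloop : LooplessOn n A)
    (hdeg : ∀ v, arcDegree A v ≤ v) :
    grogD n A + 2 * #A = ∑ v ∈ Icc 1 n, v := by
  have hres : ∀ {l}, ValidSeq (initState A) l →
      resid n (runSeq (initState A) l) + 2 * l.length = ∑ v ∈ Icc 1 n, v :=
    resid_runSeq_add_two_mul_length hloop
  have hlen : ∀ {l}, ValidSeq (initState A) l → l.length ≤ #A := fun hl =>
    (card_arcs_runSeq_add_length hl).symm ▸ Nat.le_add_left _ _
  obtain ⟨l, hl, hempty⟩ := exists_validSeq_arcs_runSeq_eq_empty (initState A) hdeg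
  have hresl := hres hl
  have hfull : l.length = #A := by
    have := card_arcs_runSeq_add_length hl
    rw [hempty, card_empty, zero_add] at this
    exact this
  have hleast : IsLeast {r | ∃ l, IsStrategy (initState A) l ∧
      resid n (runSeq (initState A) l) = r} (resid n (runSeq (initState A) l)) := by
    refine ⟨⟨l, ⟨hl, by simp [Terminal, hempty]⟩, rfl⟩, ?_⟩
    rintro _ ⟨l', ⟨hl', -⟩, rfl⟩
    have := hres hl'
    have := hlen hl'
    omega
  rw [grogD, hleast.csInf_eq]
  omega

lemma jacoInDeg_eq_card (m : ℕ) : jacoInDeg m = #((range m).filter fun k => jacoArc k m) := by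
  have hunfold : jacoInDeg m = #((range m).attach.filter
      fun k => 1 ≤ k.1 ∧ m ≤ 2 * k.1 - jacoInDeg k.1) := by
    rw [jacoInDeg, Nat.strongRecOn, WellFounded.fix_eq]
    rfl
  rw [hunfold, ← card_map (Function.Embedding.subtype _), map_filter' _ _ _, attach_map_val]
  congr 1
  ext k
  rw [mem_filter (p := fun k => jacoArc k m)]
  simp [jacoArc]
  tauto

lemma jacoInDeg_le (m : ℕ) : jacoInDeg m ≤ m :=
  (jacoInDeg_eq_card m).trans_le ((card_filter_le _ _).trans_eq (card_range m))

/-- Out-arcs of `v` end in `(v, 2v - d⁻(v)]` and in-arcs number `d⁻(v)`. -/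
lemma arcDegree_jacoArcs_le (m v : ℕ) : arcDegree (jacoArcs m) v ≤ v := by
  have hout : #((jacoArcs m).filter fun a => a.1 = v) ≤ #(Ioc v (2 * v - jacoInDeg v)) := by
    refine card_le_card_of_injOn Prod.snd (fun a ha => ?_) fun a ha b hb hab => ?_
    · simp only [coe_filter, jacoArcs, mem_filter, Set.mem_ofPred_eq] at ha
      obtain ⟨⟨-, -, hlt, hle⟩, rfl⟩ := ha
      exact mem_Ioc.mpr ⟨hlt, hle⟩
    · simp only [coe_filter, Set.mem_ofPred_eq] at ha hb
      exact Prod.ext (ha.2.trans hb.2.symm) hab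
  have hin : #((jacoArcs m).filter fun a => a.2 = v) ≤ jacoInDeg v := by
    rw [jacoInDeg_eq_card]
    refine card_le_card_of_injOn Prod.fst (fun a ha => ?_) fun a ha b hb hab => ?_
    · simp only [coe_filter, jacoArcs, mem_filter, Set.mem_ofPred_eq] at ha
      obtain ⟨⟨-, harc⟩, rfl⟩ := ha
      exact mem_filter.mpr ⟨mem_range.mpr harc.2.1, harc⟩
    · simp only [coe_filter, Set.mem_ofPred_eq] at ha hb
      exact Prod.ext hab (ha.2.trans hb.2.symm)
  have := jacoInDeg_le v
  calc arcDegree (jacoArcs m) v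
      ≤ #((jacoArcs m).filter fun a => a.1 = v) + #((jacoArcs m).filter fun a => a.2 = v) := by
        rw [arcDegree, filter_or]; exact card_union_le _ _
    _ ≤ v := by rw [Nat.card_Ioc] at hout; omega

lemma looplessOn_jacoArcs (m : ℕ) : LooplessOn m (jacoArcs m) := by
  intro a ha
  simp only [jacoArcs, mem_filter, mem_product] at ha
  exact ⟨ha.2.2.1.ne, ha.1⟩

lemma grogJaco_add_two_mul_card (m : ℕ) :
    grogJaco m + 2 * #(jacoArcs m) = ∑ v ∈ Icc 1 m, v :=
  grogD_add_two_mul_card (looplessOn_jacoArcs m) (arcDegree_jacoArcs_le m)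

lemma jacoArcs_succ (n : ℕ) :
    jacoArcs (n + 1) = jacoArcs n ∪ ((Icc 1 n).filter fun j => jacoArc j (n + 1)).image
      fun j => (j, n + 1) := by
  ext ⟨j, k⟩
  simp only [jacoArcs, mem_union, mem_filter, mem_product, mem_image, mem_Icc,
    Prod.mk.injEq]
  constructor
  · rintro ⟨⟨⟨hj1, hjn⟩, hk1, hkn⟩, harc⟩
    have := harc.2.1
    rcases Nat.lt_or_ge k (n + 1) with hk | hk
    · exact Or.inl ⟨⟨⟨hj1, by omega⟩, hk1, by omega⟩, harc⟩
    · obtain rfl : k = n + 1 := by omega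
      exact Or.inr ⟨j, ⟨⟨hj1, by omega⟩, harc⟩, rfl, rfl⟩
  · rintro (⟨⟨⟨hj1, hjn⟩, hk1, hkn⟩, harc⟩ | ⟨j, ⟨⟨hj1, hjn⟩, harc⟩, rfl, rfl⟩)
    · exact ⟨⟨⟨hj1, by omega⟩, hk1, by omega⟩, harc⟩
    · exact ⟨⟨⟨hj1, by omega⟩, by omega, le_rfl⟩, harc⟩

lemma card_jacoArcs_succ (n : ℕ) :
    #(jacoArcs (n + 1)) = #(jacoArcs n) + jacoInDegFin n (n + 1) := by
  rw [jacoArcs_succ, card_union_of_disjoint, card_image_of_injective _ (Prod.mk_left_injective _),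
    jacoInDegFin]
  refine disjoint_left.mpr fun a ha hb => ?_
  obtain ⟨j, -, rfl⟩ := mem_image.mp hb
  have := ((looplessOn_jacoArcs n) _ ha).2.2
  simp at this

lemma grogJaco_succ_add (n : ℕ) :
    grogJaco (n + 1) + 2 * jacoInDegFin n (n + 1) = grogJaco n + (n + 1) := by
  have hsucc := grogJaco_add_two_mul_card (n + 1)
  rw [card_jacoArcs_succ, sum_Icc_succ_top (Nat.le_add_left 1 n),
    ← grogJaco_add_two_mul_card n] at hsucc
  omega

theorem grog_number_of_Jaco_recursion_general (n i : ℕ)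
    (hi : i ∈ Finset.Icc 1 n)
    (hJac : ∀ j : ℕ, jacoArc j (n + 1) ↔ (i + 1 ≤ j ∧ j ≤ n)) :
    (grogJaco (n + 1) : ℤ) = (grogJaco n : ℤ) + (2 * (i : ℤ) - (n : ℤ)) + 1 := by
  have hin : (Icc 1 n).filter (fun j => jacoArc j (n + 1)) = Icc (i + 1) n := by
    ext j
    simp only [mem_filter, mem_Icc, hJac]
    omega
  have hindeg : jacoInDegFin n (n + 1) = n - i := by
    rw [jacoInDegFin, hin, Nat.card_Icc]
    omega
  have hrec := grogJaco_succ_add n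
  have hi_le : i ≤ n := (mem_Icc.mp hi).2
  rw [hindeg] at hrec
  omega

/-- Let `n ≥ 2` and let `v_i` be the Jaconian vertex of `J_n(1)`, so that
the in-neighbourhood of `v_{n+1}` in `J_{n+1}(1)` is exactly `{v_{i+1}, …, v_n}`. Then
`g(J_{n+1}(1)) = g(J_n(1)) + (2i - n) + 1`. -/
theorem grog_number_of_Jaco_recursion (n i : ℕ) (hn : 2 ≤ n)
    (hi : i ∈ Finset.Icc 1 n)
    (hJac : ∀ j : ℕ, jacoArc j (n + 1) ↔ (i + 1 ≤ j ∧ j ≤ n)) :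
    (grogJaco (n + 1) : ℤ) = (grogJaco n : ℤ) + (2 * (i : ℤ) - (n : ℤ)) + 1 :=
  grog_number_of_Jaco_recursion_general n i hi hJac
end
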